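/- In a recollement of abelian categories, for an object H of the middle category B the following are equivalent: (1) Hom_B(H, G) = 0 for every G with e(G) = 0; (2) the counit map ℓ(e(H)) → H is an epimorphism; (3) every non-zero quotient object H' of H satisfies e(H') ≠ 0; (4) q(H) = 0. -/

import Mathlib

/-!
The kernel of `e` is the essential image of `i`, so by the adjunction `q ⊣ i` condition (1) says
that every map `q H ⟶ a` vanishes, i.e. `q H = 0`. The functor `e` is a left adjoint, hence right
exact, and it sends the counit `ℓ (e H) ⟶ H` to a split epimorphism; so the cokernel of the counit
is a quotient of `H` killed by `e`, which gives (3) ⇒ (2).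
-/

open CategoryTheory Limits

universe v u v₁ u₁ v₂ u₂

/-- A recollement of abelian categories, with the six functors, the four adjunctions,
the isomorphism conditions and the identification of `A` with `Ker e`. -/
structure Recollement (A : Type u) (B : Type u₁) (C : Type u₂)
    [Category.{v} A] [Category.{v₁} B] [Category.{v₂} C]
    [Abelian A] [Abelian B] [Abelian C] where
  i : A ⥤ B
  p : B ⥤ A
  q : B ⥤ A
  e : B ⥤ C
  l : C ⥤ B
  r : C ⥤ B
  adj_qi : q ⊣ i
  adj_ip : i ⊣ p
  adj_le : l ⊣ e
  adj_er : e ⊣ r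
  counit_er_iso : IsIso adj_er.counit
  unit_le_iso : IsIso adj_le.unit
  counit_qi_iso : IsIso adj_qi.counit
  unit_ip_iso : IsIso adj_ip.unit
  ker_e : ∀ b : B, (∃ a : A, Nonempty (i.obj a ≅ b)) ↔ IsZero (e.obj b)

namespace Recollement

variable {A : Type u} {B : Type u₁} {C : Type u₂}
    [Category.{v} A] [Category.{v₁} B] [Category.{v₂} C]
    [Abelian A] [Abelian B] [Abelian C] (R : Recollement A B C)

/-- The canonical map `ℓ(M) ⟶ r(M)`, adjoint to the inverse of the counit `e(r(M)) ≅ M`. -/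
noncomputable def γ (M : C) : R.l.obj M ⟶ R.r.obj M :=
  (R.adj_le.homEquiv M (R.r.obj M)).symm
    (letI := R.counit_er_iso; inv (R.adj_er.counit.app M))

/-- The intermediate extension `c(M) = Im(ℓ(M) → r(M))`. -/
noncomputable def c (M : C) : B := Limits.image (R.γ M)

end Recollement

variable {A : Type u} {B : Type u₁} {C : Type u₂}
    [Category.{v} A] [Category.{v₁} B] [Category.{v₂} C]
    [Abelian A] [Abelian B] [Abelian C]

namespace CategoryTheory.Adjunction

variable {D E : Type*} [Category D] [Category E] [HasZeroMorphisms D] [HasZeroMorphisms E]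
  {F : D ⥤ E} {G : E ⥤ D} (adj : F ⊣ G)

include adj

lemma eq_zero_of_isZero_right_obj [F.PreservesZeroMorphisms] {X : D} {Y : E}
    (hY : IsZero (G.obj Y)) (f : F.obj X ⟶ Y) : f = 0 :=
  calc f = (adj.homEquiv X Y).symm (adj.homEquiv X Y f) :=
        ((adj.homEquiv X Y).symm_apply_apply f).symm
    _ = (adj.homEquiv X Y).symm 0 := by rw [hY.eq_of_tgt (adj.homEquiv X Y f) 0]
    _ = 0 := by simp [homEquiv_counit]

lemma eq_zero_of_isZero_left_obj [G.PreservesZeroMorphisms] {X : D} {Y : E}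
    (hX : IsZero (F.obj X)) (f : X ⟶ G.obj Y) : f = 0 :=
  calc f = adj.homEquiv X Y ((adj.homEquiv X Y).symm f) :=
        ((adj.homEquiv X Y).apply_symm_apply f).symm
    _ = adj.homEquiv X Y 0 := by rw [hX.eq_of_src ((adj.homEquiv X Y).symm f) 0]
    _ = 0 := by simp [homEquiv_unit]

lemma isZero_left_obj_iff [F.PreservesZeroMorphisms] [G.PreservesZeroMorphisms] {X : D} :
    IsZero (F.obj X) ↔ ∀ (Y : E) (f : X ⟶ G.obj Y), f = 0 := by
  refine ⟨fun hX _ => adj.eq_zero_of_isZero_left_obj hX, fun h => ?_⟩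
  rw [IsZero.iff_id_eq_zero, ← adj.left_triangle_components X, h _ (adj.unit.app X)]
  simp

lemma isZero_obj_cokernel_counit [G.PreservesZeroMorphisms] (Y : E)
    [HasCokernel (adj.counit.app Y)] [PreservesColimit (parallelPair (adj.counit.app Y) 0) G] :
    IsZero (G.obj (cokernel (adj.counit.app Y))) := by
  have : IsSplitEpi (G.map (adj.counit.app Y)) :=
    IsSplitEpi.mk' ⟨_, adj.right_triangle_components Y⟩
  exact (isZero_cokernel_of_epi _).of_iso (PreservesCokernel.iso G _)

end CategoryTheory.Adjunction

namespace Recollement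

variable (R : Recollement A B C)

instance : R.e.IsLeftAdjoint := R.adj_er.isLeftAdjoint

instance : R.l.IsLeftAdjoint := R.adj_le.isLeftAdjoint

instance : R.q.IsLeftAdjoint := R.adj_qi.isLeftAdjoint

instance : R.i.IsRightAdjoint := R.adj_qi.isRightAdjoint

lemma forall_hom_eq_zero_of_isZero_e_iff (H : B) :
    (∀ (G : B) (f : H ⟶ G), IsZero (R.e.obj G) → f = 0) ↔
      ∀ (a : A) (f : H ⟶ R.i.obj a), f = 0 := by
  refine ⟨fun h a f => h _ f ((R.ker_e _).1 ⟨a, ⟨Iso.refl _⟩⟩), fun h G f hG => ?_⟩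
  obtain ⟨a, ⟨φ⟩⟩ := (R.ker_e G).2 hG
  calc f = (f ≫ φ.inv) ≫ φ.hom := by simp
    _ = 0 := by rw [h a (f ≫ φ.inv), zero_comp]

end Recollement

/-- characterizations of costable objects: for `H` in the middle category the
following are equivalent: (1) `Hom(H, G) = 0` whenever `e G = 0`; (2) the counit
`ℓ (e H) → H` is an epimorphism; (3) every non-zero quotient object of `H` is not killed
by `e`; (4) `q H = 0`. -/
theorem recollement_costable_tfae (R : Recollement A B C) (H : B) :
    List.TFAE
      [ ∀ (G : B) (f : H ⟶ G), IsZero (R.e.obj G) → f = 0,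
        Epi (R.adj_le.counit.app H),
        ∀ (H' : B) (g : H ⟶ H'), Epi g → ¬ IsZero H' → ¬ IsZero (R.e.obj H'),
        IsZero (R.q.obj H) ] := by
  tfae_have 1 ↔ 4 :=
    (R.forall_hom_eq_zero_of_isZero_e_iff H).trans R.adj_qi.isZero_left_obj_iff.symm
  tfae_have 1 → 3 := fun h1 H' g _ hH' he => hH' (IsZero.of_epi_eq_zero g (h1 H' g he))
  tfae_have 3 → 2 := fun h3 => Preadditive.epi_of_isZero_cokernel _ <| by
    by_contra hc
    exact h3 _ (cokernel.π _) inferInstance hc (R.adj_le.isZero_obj_cokernel_counit H)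
  tfae_have 2 → 1 := fun _ G f hG =>
    zero_of_epi_comp (R.adj_le.counit.app H) (R.adj_le.eq_zero_of_isZero_right_obj hG _)
  tfae_finish
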